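/- arXiv:2101.01312 — 2 statements merged into one kernel-verified Lean document; each statement's English description precedes it below -/
import Mathlib

section
/- Let h : τ → Option τ and let t0 be a task. Suppose n is the least positive integer with walk t0 n = some t0. Then there exist pairwise distinct tasks s_0, s_1, …, s_{n-1} with s_0 = t0 and walk t0 i = some s_i for each i < n, and the finite set {s_0, …, s_{n-1}} is a deadlock cycle. (The tasks reported by the detector upon first return form exactly one deadlock cycle, containing the alarming task; this is the precision claim of the paper's Theorem 5.1 in sharpened form.) -/
/-- A finite set of tasks is deadlocked if it is nonempty and every task in it
waits (via the waits-for map `h`) on some task also in the set. -/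
def Deadlocked {τ : Type*} (h : τ → Option τ) (T : Finset τ) : Prop :=
  T.Nonempty ∧ ∀ t ∈ T, ∃ t' ∈ T, h t = some t'

/-- A deadlock cycle is a deadlocked set that is minimal: no nonempty strict
subset of it is deadlocked. -/
def DeadlockCycle {τ : Type*} (h : τ → Option τ) (T : Finset τ) : Prop :=
  Deadlocked h T ∧ ∀ S : Finset τ, S ⊂ T → S.Nonempty → ¬ Deadlocked h S

/-- The detector's traversal: `walk h t0 n` follows the waits-for map `h`
for `n` steps starting from `t0`. -/
def walk {τ : Type*} (h : τ → Option τ) (t0 : τ) : ℕ → Option τ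
  | 0 => some t0
  | n + 1 => (walk h t0 n).bind h

/-!
Iterating `h` from `t0` is periodic with period `n` once the walk returns to `t0` at time `n`, so
the walk never gets stuck and visits exactly the tasks `s 0, …, s (n-1)`. That set is deadlocked
since the successor of each visited task is visited again. It is minimal because a deadlocked set
is closed under walks, and from any visited task the walk reaches every other one. Distinctness is
where minimality of `n` enters: `s i = s j` with `i < j < n` would bring the walk back to `t0` after
`i + (n - j) < n` steps.
-/

section

variable {τ : Type*} {h : τ → Option τ} {t0 : τ} {n : ℕ}

theorem walk_add (m k : ℕ) :
    walk h t0 (m + k) = (walk h t0 m).bind fun t => walk h t k := by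
  induction k with
  | zero => simp [walk]
  | succ k ih => rw [← add_assoc, walk, ih, Option.bind_assoc]; rfl

theorem Deadlocked.walk_mem {S : Finset τ} (hS : Deadlocked h S) {t : τ} (ht : t ∈ S) :
    ∀ {k : ℕ} {u : τ}, walk h t k = some u → u ∈ S
  | 0, u, hu => Option.some.inj hu ▸ ht
  | k + 1, u, hu => by
    obtain ⟨v, hv, hvu⟩ := Option.bind_eq_some_iff.mp hu
    obtain ⟨w, hw, hvw⟩ := hS.2 v (hS.walk_mem ht hv)
    exact Option.some.inj (hvw.symm.trans hvu) ▸ hw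

theorem walk_mul_add (hret : walk h t0 n = some t0) (q j : ℕ) :
    walk h t0 (n * q + j) = walk h t0 j := by
  induction q with
  | zero => simp
  | succ q ih => rw [Nat.mul_succ, add_comm _ n, add_assoc, walk_add, hret, Option.bind_some, ih]

theorem walk_mod (hret : walk h t0 n = some t0) (i : ℕ) :
    walk h t0 (i % n) = walk h t0 i := by
  conv_rhs => rw [← Nat.div_add_mod i n, walk_mul_add hret]

theorem walk_ne_none (hn : 0 < n) (hret : walk h t0 n = some t0) (i : ℕ) :
    walk h t0 i ≠ none := by
  intro hi
  have hback : walk h t0 (i + (n * i - i)) = some t0 := by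
    rw [show i + (n * i - i) = n * i + 0 by have := Nat.le_mul_of_pos_left i hn; omega,
      walk_mul_add hret]
    rfl
  rw [walk_add, hi] at hback
  cases hback

theorem walk_injOn_Iio (hret : walk h t0 n = some t0)
    (hleast : ∀ m : ℕ, 1 ≤ m → walk h t0 m = some t0 → n ≤ m) :
    Set.InjOn (walk h t0) (Set.Iio n) := by
  suffices ∀ i j, i < j → j < n → walk h t0 i ≠ walk h t0 j by
    intro i hi j hj hij
    by_contra hne
    rcases Nat.lt_or_gt_of_ne hne with hlt | hlt
    exacts [this i j hlt hj hij, this j i hlt hi hij.symm]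
  intro i j hij hjn heq
  have hback : walk h t0 (i + (n - j)) = some t0 := by
    rw [walk_add, heq, ← walk_add, Nat.add_sub_cancel' hjn.le, hret]
  have := hleast _ (by omega) hback
  omega

theorem mem_image_range_iff [DecidableEq τ] {s : ℕ → τ} (hn : 0 < n)
    (hret : walk h t0 n = some t0) (hs : ∀ i, walk h t0 i = some (s i)) {u : τ} :
    u ∈ (Finset.range n).image s ↔ ∃ i, walk h t0 i = some u := by
  refine ⟨fun hu => ?_, fun ⟨i, hi⟩ => ?_⟩
  · obtain ⟨i, -, rfl⟩ := Finset.mem_image.mp hu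
    exact ⟨i, hs i⟩
  · refine Finset.mem_image.mpr ⟨i % n, Finset.mem_range.mpr (Nat.mod_lt i hn), ?_⟩
    rw [← Option.some_inj, ← hs, walk_mod hret, hi]

theorem deadlockCycle_image_range [DecidableEq τ] {s : ℕ → τ} (hn : 0 < n)
    (hret : walk h t0 n = some t0) (hs : ∀ i, walk h t0 i = some (s i)) :
    DeadlockCycle h ((Finset.range n).image s) := by
  have hmem := fun u => mem_image_range_iff (u := u) hn hret hs
  refine ⟨⟨⟨t0, (hmem t0).mpr ⟨0, rfl⟩⟩, fun u hu => ?_⟩, fun S hST ⟨t, htS⟩ hS => ?_⟩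
  · obtain ⟨i, hi⟩ := (hmem u).mp hu
    have hstep : h u = some (s (i + 1)) := by rw [← hs, walk, hi, Option.bind_some]
    exact ⟨s (i + 1), (hmem _).mpr ⟨i + 1, hs _⟩, hstep⟩
  · obtain ⟨i, hi⟩ := (hmem t).mp (hST.subset htS)
    refine hST.not_subset fun u hu => ?_
    obtain ⟨j, hj⟩ := (hmem u).mp hu
    -- `t` is `walk i`, and the walk from it reaches `walk (n * i + j) = walk j = some u`
    have hreach : walk h t (n * i - i + j) = some u := by
      rw [← Option.bind_some t (walk h · _), ← hi, ← walk_add,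
        show i + (n * i - i + j) = n * i + j by have := Nat.le_mul_of_pos_left i hn; omega,
        walk_mul_add hret, hj]
    exact hS.walk_mem htS hreach

end

/-- If `n` is the least positive integer with `walk h t0 n = some t0`, then the
tasks visited in the first `n` steps are pairwise distinct, start at `t0`,
and form a deadlock cycle. -/
theorem stmt_5 {τ : Type*} [DecidableEq τ] (h : τ → Option τ) (t0 : τ) (n : ℕ)
    (hn : 1 ≤ n) (hret : walk h t0 n = some t0)
    (hleast : ∀ m : ℕ, 1 ≤ m → walk h t0 m = some t0 → n ≤ m) :
    ∃ s : ℕ → τ, (∀ i < n, ∀ j < n, s i = s j → i = j) ∧ s 0 = t0 ∧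
      (∀ i < n, walk h t0 i = some (s i)) ∧
      DeadlockCycle h ((Finset.range n).image s) := by
  set s : ℕ → τ := fun i => (walk h t0 i).getD t0
  have hs : ∀ i, walk h t0 i = some (s i) := fun i =>
    (Option.getD_of_ne_none (walk_ne_none hn hret i) t0).symm
  refine ⟨s, fun i hi j hj hij => ?_, rfl, fun i _ => hs i, deadlockCycle_image_range hn hret hs⟩
  exact walk_injOn_Iio hret hleast hi hj (by rw [hs, hs, hij])
end

section
/- Let h : τ → Option τ and let t0 be a task. Then t0 belongs to some deadlock cycle if and only if there exists an integer n ≥ 1 with walk t0 n = some t0. (A task is in a deadlock cycle exactly when the detector's traversal started at that task returns to it; this combines the precision and correctness directions of the paper's main theorems for the alarming task itself.) -/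
lemma walk_add_s13 {τ : Type*} (h : τ → Option τ) (t0 : τ) (a b : ℕ) :
    walk h t0 (a + b) = (walk h t0 a).bind (fun u => walk h u b) := by
  induction b with
  | zero => cases hwa : walk h t0 a <;> simp [walk, hwa]
  | succ b ih =>
    show walk h t0 (a + b + 1) = _
    rw [walk, ih]
    cases hwa : walk h t0 a <;> simp [walk, hwa]

/-- A task belongs to some deadlock cycle exactly when the detector's
traversal started at that task returns to it. -/
theorem stmt_13 {τ : Type*} (h : τ → Option τ) (t0 : τ) :
    (∃ T : Finset τ, DeadlockCycle h T ∧ t0 ∈ T) ↔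
      ∃ n : ℕ, 1 ≤ n ∧ walk h t0 n = some t0 := by
  classical
  constructor
  · rintro ⟨T, ⟨⟨hne, hdl⟩, hmin⟩, ht0⟩
    have allSome : ∀ k, ∃ u, walk h t0 k = some u ∧ u ∈ T := by
      intro k
      induction k with
      | zero => exact ⟨t0, rfl, ht0⟩
      | succ k ih =>
        obtain ⟨u, hu, huT⟩ := ih
        obtain ⟨v, hvT, hv⟩ := hdl u huT
        exact ⟨v, by rw [walk, hu]; exact hv, hvT⟩
    choose g hg hgT using allSome
    have hg0 : g 0 = t0 := by
      have := hg 0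
      simp only [walk, Option.some_inj] at this
      exact this.symm
    have hstep : ∀ k, h (g k) = some (g (k + 1)) := by
      intro k
      have h1 := hg (k + 1)
      rw [walk, hg k] at h1
      simpa using h1
    have hshift : ∀ a b, g a = g b → ∀ d, g (a + d) = g (b + d) := by
      intro a b hab d
      induction d with
      | zero => simpa using hab
      | succ d ih =>
        have h1 := hstep (a + d)
        rw [ih, hstep (b + d)] at h1
        exact (Option.some_injective _ h1).symm
    obtain ⟨i, j, hij, hgij⟩ : ∃ i j, i < j ∧ g i = g j := by
      obtain ⟨i, j, hne', heq⟩ :=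
        Finite.exists_ne_map_eq_of_infinite (fun k : ℕ => (⟨g k, hgT k⟩ : {x // x ∈ T}))
      rcases hne'.lt_or_gt with hlt | hlt
      · exact ⟨i, j, hlt, congrArg Subtype.val heq⟩
      · exact ⟨j, i, hlt, (congrArg Subtype.val heq).symm⟩
    set C : Finset τ := (Finset.range (j - i)).image (fun m => g (i + m)) with hC
    have hCsub : C ⊆ T := by
      intro x hx
      simp only [hC, Finset.mem_image, Finset.mem_range] at hx
      obtain ⟨m, _, rfl⟩ := hx
      exact hgT _
    have hiC : g i ∈ C := by
      simp only [hC, Finset.mem_image, Finset.mem_range]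
      exact ⟨0, by omega, by simp⟩
    have hCne : C.Nonempty := ⟨g i, hiC⟩
    have hCdl : Deadlocked h C := by
      refine ⟨hCne, ?_⟩
      intro x hx
      simp only [hC, Finset.mem_image, Finset.mem_range] at hx
      obtain ⟨m, hm, rfl⟩ := hx
      by_cases hmj : m + 1 < j - i
      · refine ⟨g (i + (m + 1)), ?_, ?_⟩
        · simp only [hC, Finset.mem_image, Finset.mem_range]
          exact ⟨m + 1, hmj, rfl⟩
        · exact hstep (i + m)
      · have hj : i + m + 1 = j := by omega
        refine ⟨g i, hiC, ?_⟩
        rw [hstep (i + m), hj, ← hgij]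
    have hCT : C = T := by
      by_contra hne'
      exact hmin C (Finset.ssubset_iff_subset_ne.mpr ⟨hCsub, hne'⟩) hCne hCdl
    have ht0C : t0 ∈ C := hCT ▸ ht0
    simp only [hC, Finset.mem_image, Finset.mem_range] at ht0C
    obtain ⟨m, hm, hgm⟩ := ht0C
    refine ⟨j + m, by omega, ?_⟩
    have : g (j + m) = t0 := by
      rw [← hshift i j hgij m, hgm]
    rw [hg (j + m), this]
  · rintro ⟨n, hn1, hwn⟩
    have periodic : ∀ k, walk h t0 (n + k) = walk h t0 k := by
      intro k
      rw [walk_add_s13, hwn]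
      rfl
    have allSome : ∀ k, ∃ u, walk h t0 k = some u := by
      intro k
      induction k using Nat.strong_induction_on with
      | _ k ih =>
        rcases lt_or_ge k n with hk | hk
        · have h1 := walk_add_s13 h t0 k (n - k)
          rw [Nat.add_sub_cancel' hk.le, hwn] at h1
          cases hh : walk h t0 k with
          | none => rw [hh] at h1; simp at h1
          | some u => exact ⟨u, rfl⟩
        · have hk' : k - n < k := by omega
          obtain ⟨u, hu⟩ := ih _ hk'
          refine ⟨u, ?_⟩
          have h1 := periodic (k - n)
          rw [Nat.add_sub_cancel' hk] at h1
          rw [h1, hu]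
    choose g hg using allSome
    have hg0 : g 0 = t0 := by
      have := hg 0
      simp only [walk, Option.some_inj] at this
      exact this.symm
    have hstep : ∀ k, h (g k) = some (g (k + 1)) := by
      intro k
      have h1 := hg (k + 1)
      rw [walk, hg k] at h1
      simpa using h1
    have gperiod : ∀ k, g (n + k) = g k := by
      intro k
      have h1 := periodic k
      rw [hg (n + k), hg k] at h1
      exact Option.some_injective _ h1
    refine ⟨(Finset.range n).image g, ⟨⟨?_, ?_⟩, ?_⟩, ?_⟩
    · exact ⟨g 0, Finset.mem_image.mpr ⟨0, Finset.mem_range.mpr (by omega), rfl⟩⟩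
    · intro x hx
      simp only [Finset.mem_image, Finset.mem_range] at hx
      obtain ⟨m, hm, rfl⟩ := hx
      by_cases hmn : m + 1 < n
      · exact ⟨g (m + 1), Finset.mem_image.mpr ⟨m + 1, Finset.mem_range.mpr hmn, rfl⟩,
          hstep m⟩
      · have hmn' : m + 1 = n := by omega
        refine ⟨g 0, Finset.mem_image.mpr ⟨0, Finset.mem_range.mpr (by omega), rfl⟩, ?_⟩
        rw [hstep m, hmn']
        have := gperiod 0
        simp only [Nat.add_zero] at this
        rw [this]
    · intro S hS hSne hSdl
      obtain ⟨s, hs⟩ := hSne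
      have hsT := hS.subset hs
      simp only [Finset.mem_image, Finset.mem_range] at hsT
      obtain ⟨m, hm, hgm⟩ := hsT
      have horbit : ∀ d, g (m + d) ∈ S := by
        intro d
        induction d with
        | zero => simpa [hgm] using hs
        | succ d ih =>
          obtain ⟨t', ht'S, ht'⟩ := hSdl.2 _ ih
          rw [hstep (m + d)] at ht'
          have : t' = g (m + d + 1) := Option.some_injective _ ht'.symm
          rwa [this] at ht'S
      have hTS : (Finset.range n).image g ⊆ S := by
        intro x hx
        simp only [Finset.mem_image, Finset.mem_range] at hx
        obtain ⟨m', hm', rfl⟩ := hx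
        have hd : m + ((n - m) + m') = n + m' := by omega
        have := horbit ((n - m) + m')
        rw [hd, gperiod m'] at this
        exact this
      exact absurd (Finset.Subset.antisymm hS.subset hTS) hS.ne
    · exact Finset.mem_image.mpr ⟨0, Finset.mem_range.mpr (by omega), hg0⟩
end
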